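/- Let A ∈ ℂ^{m×d} have full column rank, let x ∈ ℂ^d be nonzero, and define the real matrix D_A(x) = [[Re A, Im A, Re(dg(Ax))], [-Im A, Re A, -Im(dg(Ax))]] of size 2m × (2d+m). Then x ∈ W_A if and only if rank(D_A(x)) = 2d + |N(Ax)| - 1. -/

import Mathlib

attribute [local instance] Classical.propDecidable

noncomputable def csign (z : ℂ) : ℂ := if z = 0 then 0 else z / ‖z‖

def Wset {m d : ℕ} (B : Matrix (Fin m) (Fin d) ℂ) : Set (Fin d → ℂ) :=
  {x | ∀ y : Fin d → ℂ,
    (∀ j, csign (B.mulVec y j) = csign (B.mulVec x j)) →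
      ∃ t : ℝ, 0 < t ∧ x = fun k => (t : ℂ) * y k}

/-- The real discriminant matrix
`D_A(x) = [[Re A, Im A, Re(dg(Ax))], [-Im A, Re A, -Im(dg(Ax))]]` of size `2m × (2d+m)`. -/
noncomputable def discD {m d : ℕ} (A : Matrix (Fin m) (Fin d) ℂ) (x : Fin d → ℂ) :
    Matrix (Fin m ⊕ Fin m) ((Fin d ⊕ Fin d) ⊕ Fin m) ℝ :=
  Matrix.fromBlocks
    (Matrix.fromCols (A.map Complex.re) (A.map Complex.im))
    (Matrix.diagonal fun j => (A.mulVec x j).re)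
    (Matrix.fromCols (-(A.map Complex.im)) (A.map Complex.re))
    (-(Matrix.diagonal fun j => (A.mulVec x j).im))

/-!
Identify `ℝ^{2m}` with `ℂ^m` by `u ↦ u₁ - i u₂`. The column space of `D_A(x)` becomes `U + V` with
`U = A ℂ^d` (real dimension `2d`) and `V = {dg(Ax) c : c ∈ ℝ^m}` (real dimension `|N(Ax)|`), so
`rank D_A(x) = 2d + |N(Ax)| - dim (U ∩ V)`, and `Ax ∈ U ∩ V`. It remains to see that `x ∈ W_A` iff
`U ∩ V = ℝ Ax`. If `Az = dg(Ax) c`, then `A(x + εz) = dg(1 + εc) Ax` has the sign pattern of `Ax`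
for small `ε > 0`, so `x ∈ W_A` forces `z ∈ ℝ x`. Conversely, `sign(Ay) = sign(Ax)` means
`Ay = dg(|Ay|/|Ax|) Ax ∈ U ∩ V`.
-/

open Module Submodule Matrix Filter Topology

lemma csign_eq_zero_iff {z : ℂ} : csign z = 0 ↔ z = 0 := by
  by_cases hz : z = 0 <;> simp [csign, hz]

lemma norm_mul_csign (z : ℂ) : (‖z‖ : ℂ) * csign z = z := by
  by_cases hz : z = 0
  · simp [csign, hz]
  · have : (‖z‖ : ℂ) ≠ 0 := by simpa using hz
    simp only [csign, hz, if_false]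
    field_simp

lemma csign_ofReal_mul {t : ℝ} (ht : 0 < t) (z : ℂ) : csign (t * z) = csign z := by
  by_cases hz : z = 0
  · simp [hz]
  · have ht' : (t : ℂ) ≠ 0 := by exact_mod_cast ht.ne'
    have hz' : (‖z‖ : ℂ) ≠ 0 := by simpa using hz
    simp only [csign, mul_eq_zero, ht', hz, or_self, if_false, norm_mul, Complex.norm_real,
      Real.norm_of_nonneg ht.le, Complex.ofReal_mul]
    field_simp

lemma eq_ofReal_mul_of_csign_eq {z w : ℂ} (h : csign z = csign w) :
    z = ((‖z‖ / ‖w‖ : ℝ) : ℂ) * w := by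
  by_cases hw : w = 0
  · rw [hw, csign_eq_zero_iff.2 rfl, csign_eq_zero_iff] at h
    simp [h, hw]
  · have hw' : (‖w‖ : ℂ) ≠ 0 := by simpa using hw
    calc z = ‖z‖ * csign w := by rw [← h, norm_mul_csign]
      _ = ((‖z‖ / ‖w‖ : ℝ) : ℂ) * (‖w‖ * csign w) := by push_cast; field_simp
      _ = _ := by rw [norm_mul_csign]

lemma exists_pos_forall_one_add_mul_pos {ι : Type*} [Finite ι] (c : ι → ℝ) :
    ∃ ε > 0, ∀ j, 0 < 1 + ε * c j := by
  have hnear : ∀ j, ∀ᶠ ε in 𝓝 (0 : ℝ), 0 < 1 + ε * c j := fun j =>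
    (Continuous.tendsto' (by fun_prop) 0 1 (by simp)).eventually (lt_mem_nhds one_pos)
  exact (eventually_mem_nhdsWithin.and
    ((eventually_all.2 hnear).filter_mono nhdsWithin_le_nhds)).exists (f := 𝓝[>] (0 : ℝ))

lemma Matrix.mulVec_injective_of_rank_eq_card {K m n : Type*} [Field K] [Fintype m] [Fintype n]
    {A : Matrix m n K} (hA : A.rank = Fintype.card n) : Function.Injective A.mulVec := by
  have hker := A.mulVecLin.finrank_range_add_finrank_ker
  rw [← Matrix.rank, hA, finrank_fintype_fun_eq_card, add_eq_left,
    Submodule.finrank_eq_zero, LinearMap.ker_eq_bot] at hker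
  exact hker

lemma Submodule.finrank_eq_one_iff_le_span_singleton {K V : Type*} [DivisionRing K]
    [AddCommGroup V] [Module K V] {S : Submodule K V} [FiniteDimensional K S] {v : V}
    (hv : v ≠ 0) (hvS : v ∈ S) : finrank K S = 1 ↔ S ≤ K ∙ v := by
  have hle : K ∙ v ≤ S := (span_singleton_le_iff_mem v S).2 hvS
  refine ⟨fun h => (eq_of_le_of_finrank_eq hle ?_).ge, fun h => ?_⟩
  · rw [h, finrank_span_singleton hv]
  · rw [le_antisymm h hle, finrank_span_singleton hv]

lemma Submodule.finrank_restrictScalars_real {E : Type*} [AddCommGroup E] [Module ℂ E]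
    (S : Submodule ℂ E) : finrank ℝ (S.restrictScalars ℝ) = 2 * finrank ℂ S :=
  ((restrictScalarsEquiv ℝ ℂ E S).restrictScalars ℝ).finrank_eq.trans (finrank_real_of_complex S)

section RealDiagonal

variable {ι : Type*} [Fintype ι] [DecidableEq ι]

def realDiag (w : ι → ℂ) : (ι → ℝ) →ₗ[ℝ] (ι → ℂ) where
  toFun c j := c j * w j
  map_add' c c' := by ext j; simp [add_mul]
  map_smul' r c := by ext j; simp [mul_assoc]

omit [Fintype ι] [DecidableEq ι] in
@[simp]
lemma realDiag_apply (w : ι → ℂ) (c : ι → ℝ) (j : ι) : realDiag w c j = c j * w j := rfl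

lemma range_realDiag (w : ι → ℂ) :
    LinearMap.range (realDiag w) = span ℝ (Set.range fun j => Pi.single j (w j)) := by
  rw [← Fintype.range_linearCombination]
  congr 1
  refine LinearMap.ext fun c => funext fun j => ?_
  simp [Fintype.linearCombination_apply, Finset.sum_apply, Pi.single_apply]

lemma finrank_range_realDiag (w : ι → ℂ) :
    finrank ℝ (LinearMap.range (realDiag w)) = Fintype.card {j // w j ≠ 0} := by
  have hsupp : span ℝ (Set.range fun j => Pi.single j (w j))
      = span ℝ (Set.range fun j : {j // w j ≠ 0} => Pi.single (j : ι) (w j)) := by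
    refine le_antisymm (span_le.2 ?_) (span_mono fun _ ⟨j, hj⟩ => ⟨j, hj⟩)
    rintro _ ⟨j, rfl⟩
    by_cases hj : w j = 0
    · simp [hj]
    · exact subset_span ⟨⟨j, hj⟩, rfl⟩
  have hrestrict : LinearMap.funLeft ℝ ℂ (Subtype.val : {j // w j ≠ 0} → ι) ∘
      (fun j : {j // w j ≠ 0} => Pi.single (j : ι) (w j)) =
        fun j : {j // w j ≠ 0} => Pi.single j (w j) := by
    ext j k
    simp [LinearMap.funLeft, Pi.single_apply, Subtype.ext_iff]
  rw [range_realDiag, hsupp, finrank_span_eq_card]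
  exact .of_comp _ <| hrestrict ▸
    Pi.linearIndependent_single_of_ne_zero (R := ℝ) fun j : {j // w j ≠ 0} => j.2

end RealDiagonal

/-- The minus sign makes the two block rows of `discD` the real part and minus the imaginary part
of a complex vector. -/
def sumRealEquiv (ι : Type*) : (ι ⊕ ι → ℝ) ≃ₗ[ℝ] (ι → ℂ) where
  toFun u j := u (.inl j) - u (.inr j) * Complex.I
  invFun v := Sum.elim (fun j => (v j).re) (fun j => -(v j).im)
  map_add' u v := by ext j; simp only [Pi.add_apply, Complex.ofReal_add]; ring
  map_smul' r u := by
    ext j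
    simp only [Pi.smul_apply, smul_eq_mul, Complex.ofReal_mul, Real.ringHom_apply,
      Complex.real_smul]
    ring
  left_inv u := by ext (j | j) <;> simp
  right_inv v := by ext j; simp

@[simp]
lemma sumRealEquiv_apply {ι : Type*} (u : ι ⊕ ι → ℝ) (j : ι) :
    sumRealEquiv ι u j = u (.inl j) - u (.inr j) * Complex.I := rfl

lemma sumRealEquiv_discD_mulVec {m d : ℕ} (A : Matrix (Fin m) (Fin d) ℂ) (x : Fin d → ℂ)
    (u : (Fin d ⊕ Fin d) ⊕ Fin m → ℝ) :
    sumRealEquiv (Fin m) (discD A x *ᵥ u)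
      = A *ᵥ sumRealEquiv (Fin d) (u ∘ .inl) + realDiag (A *ᵥ x) (u ∘ .inr) := by
  ext j
  simp only [sumRealEquiv_apply, discD, fromBlocks_mulVec, fromCols_mulVec, neg_mulVec,
    Sum.elim_inl, Sum.elim_inr, Pi.add_apply, Pi.neg_apply, mulVec_diagonal]
  apply Complex.ext <;>
  simp [mulVec, dotProduct, Complex.re_sum, Complex.im_sum, Finset.sum_add_distrib] <;>
  ring

lemma map_range_discD {m d : ℕ} (A : Matrix (Fin m) (Fin d) ℂ) (x : Fin d → ℂ) :
    (LinearMap.range (discD A x).mulVecLin).map (sumRealEquiv (Fin m)).toLinearMap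
      = (LinearMap.range A.mulVecLin).restrictScalars ℝ ⊔ LinearMap.range (realDiag (A *ᵥ x)) := by
  ext v
  simp only [Submodule.mem_map, LinearMap.mem_range, Submodule.mem_sup, restrictScalars_mem,
    mulVecLin_apply, LinearEquiv.coe_coe, exists_exists_eq_and]
  constructor
  · rintro ⟨u, rfl⟩
    exact ⟨_, _, (sumRealEquiv_discD_mulVec A x u).symm⟩
  · rintro ⟨z, c, rfl⟩
    refine ⟨Sum.elim ((sumRealEquiv (Fin d)).symm z) c, ?_⟩
    simp [sumRealEquiv_discD_mulVec, Function.comp_def]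

lemma rank_discD {m d : ℕ} (A : Matrix (Fin m) (Fin d) ℂ) (x : Fin d → ℂ) :
    (discD A x).rank = finrank ℝ ↥((LinearMap.range A.mulVecLin).restrictScalars ℝ
      ⊔ LinearMap.range (realDiag (A *ᵥ x))) := by
  rw [Matrix.rank, ← LinearEquiv.finrank_map_eq (sumRealEquiv (Fin m)), map_range_discD]

section Wset

variable {m d : ℕ} {A : Matrix (Fin m) (Fin d) ℂ} {x : Fin d → ℂ}

lemma inf_le_span_of_mem_Wset (hx : x ∈ Wset A) :
    (LinearMap.range A.mulVecLin).restrictScalars ℝ ⊓ LinearMap.range (realDiag (A *ᵥ x))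
      ≤ ℝ ∙ (A *ᵥ x) := by
  rintro _ ⟨⟨z, rfl⟩, c, hc⟩
  rw [mulVecLin_apply] at hc ⊢
  obtain ⟨ε, hε, hpos⟩ := exists_pos_forall_one_add_mul_pos c
  have hsign : ∀ j, csign ((A *ᵥ (x + (ε : ℂ) • z)) j) = csign ((A *ᵥ x) j) := fun j => by
    have hj : (A *ᵥ (x + (ε : ℂ) • z)) j = ((1 + ε * c j : ℝ) : ℂ) * (A *ᵥ x) j := by
      rw [mulVec_add, mulVec_smul, ← hc]
      simp only [Pi.add_apply, Pi.smul_apply, realDiag_apply, smul_eq_mul]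
      push_cast
      ring
    rw [hj, csign_ofReal_mul (hpos j)]
  obtain ⟨t, ht, hxt⟩ := hx _ hsign
  have hxt' : x = (t : ℂ) • (x + (ε : ℂ) • z) := hxt
  have hAxt : A *ᵥ x = (t : ℂ) • (A *ᵥ x + (ε : ℂ) • A *ᵥ z) := by
    conv_lhs => rw [hxt']
    rw [mulVec_smul, mulVec_add, mulVec_smul]
  refine mem_span_singleton.2 ⟨(1 - t) / (t * ε), funext fun j => ?_⟩
  have hj := congrFun hAxt j
  simp only [Pi.smul_apply, Pi.add_apply, smul_eq_mul] at hj
  have ht' : (t : ℂ) ≠ 0 := by exact_mod_cast ht.ne'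
  have hε' : (ε : ℂ) ≠ 0 := by exact_mod_cast hε.ne'
  rw [Pi.smul_apply, Complex.real_smul]
  push_cast
  field_simp
  linear_combination hj

lemma mem_Wset_of_inf_le_span (hA : Function.Injective A.mulVec) (hAx : A *ᵥ x ≠ 0)
    (h : (LinearMap.range A.mulVecLin).restrictScalars ℝ ⊓ LinearMap.range (realDiag (A *ᵥ x))
      ≤ ℝ ∙ (A *ᵥ x)) :
    x ∈ Wset A := by
  intro y hy
  have hyV : A *ᵥ y ∈ LinearMap.range (realDiag (A *ᵥ x)) :=
    ⟨fun j => ‖(A *ᵥ y) j‖ / ‖(A *ᵥ x) j‖,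
      funext fun j => (eq_ofReal_mul_of_csign_eq (hy j)).symm⟩
  obtain ⟨r, hr⟩ := mem_span_singleton.1 (h ⟨⟨y, rfl⟩, hyV⟩)
  rw [mulVecLin_apply] at hr
  have hrj : ∀ j, (r : ℂ) * (A *ᵥ x) j = (A *ᵥ y) j := fun j => by
    rw [← hr, Pi.smul_apply, Complex.real_smul]
  have hyx : y = (r : ℂ) • x := hA (by rw [mulVec_smul]; exact funext fun j => (hrj j).symm)
  obtain ⟨j, hj⟩ := Function.ne_iff.1 hAx
  have hr_pos : 0 < r := by
    have hyj : (A *ᵥ y) j ≠ 0 := by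
      rwa [Ne, ← csign_eq_zero_iff, hy j, csign_eq_zero_iff]
    have hr_eq : r = ‖(A *ᵥ y) j‖ / ‖(A *ᵥ x) j‖ := by
      exact_mod_cast mul_right_cancel₀ hj ((hrj j).trans (eq_ofReal_mul_of_csign_eq (hy j)))
    rw [hr_eq]
    exact div_pos (norm_pos_iff.2 hyj) (norm_pos_iff.2 hj)
  have hr' : (r : ℂ) ≠ 0 := by exact_mod_cast hr_pos.ne'
  refine ⟨r⁻¹, inv_pos.2 hr_pos, funext fun k => ?_⟩
  rw [hyx, Pi.smul_apply, smul_eq_mul, Complex.ofReal_inv, inv_mul_cancel_left₀ hr']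

end Wset

theorem stmt_6 (m d : ℕ) (A : Matrix (Fin m) (Fin d) ℂ) (hA : A.rank = d)
    (x : Fin d → ℂ) (hx : x ≠ 0) :
    x ∈ Wset A ↔
      (discD A x).rank = 2 * d + Fintype.card {j : Fin m // A.mulVec x j ≠ 0} - 1 := by
  rw [rank_discD]
  set U := (LinearMap.range A.mulVecLin).restrictScalars ℝ
  set V := LinearMap.range (realDiag (A *ᵥ x))
  have hinj : Function.Injective A.mulVec :=
    mulVec_injective_of_rank_eq_card (by rwa [Fintype.card_fin])
  have hAx : A *ᵥ x ≠ 0 := fun h => hx (hinj (by rw [h, mulVec_zero]))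
  have hAx_mem : A *ᵥ x ∈ U ⊓ V := ⟨⟨x, rfl⟩, fun _ => 1, funext fun _ => one_mul _⟩
  have hdim := finrank_sup_add_finrank_inf_eq U V
  rw [finrank_restrictScalars_real, ← Matrix.rank, hA, finrank_range_realDiag] at hdim
  have hpos : 1 ≤ finrank ℝ ↥(U ⊓ V) := by
    rw [← finrank_span_singleton (K := ℝ) hAx]
    exact finrank_mono ((span_singleton_le_iff_mem _ _).2 hAx_mem)
  have hW : x ∈ Wset A ↔ U ⊓ V ≤ ℝ ∙ (A *ᵥ x) :=
    ⟨inf_le_span_of_mem_Wset, mem_Wset_of_inf_le_span hinj hAx⟩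
  rw [hW, ← finrank_eq_one_iff_le_span_singleton hAx hAx_mem]
  omega
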